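/- arXiv:1710.02771 — 2 statements merged into one kernel-verified Lean document; each statement's English description precedes it below -/
import Mathlib

section
/- If each G_j is an r_j-regular graph of order n_j, then the spectrum of A_α of the H-join G = ⋁_H {G_j : 1 ≤ j ≤ k} is the multiset union, over those j with G_j ≠ K_1, of {α s_j + λ : λ ∈ σ(A_α(G_j)) \ {r_j}} (where the Perron eigenvalue r_j is removed once), together with the spectrum of the k×k matrix M(G) with diagonal entries α s_j + r_j and off-diagonal (i,j)-entries (1-α) δ_{ij} √(n_i n_j), where δ_{ij} = 1 iff ij ∈ E(H) and s_j = Σ_{jl ∈ E(H)} n_l. -/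
/-!
Each diagonal block `B_j = A_α(G_j) + α s_j I` of `A_α(G)` has the all-ones vector `𝟙` as an
eigenvector with eigenvalue `r_j + α s_j`, and each off-diagonal block is the constant matrix
`(1 - α) δ_{jl} J`. Conjugate by a block-diagonal orthogonal matrix whose `j`-th block has
`𝟙 / √n_j` as a column. That column stays an eigenvector of `B_j`, and each constant block `c J`
collapses to the single entry `c √(n_j n_l)` where the two distinguished columns meet. The
conjugated matrix is then block triangular: one diagonal block is the quotient matrix `M(G)` on the
distinguished coordinates, the others are the compressions of the `B_j` to `𝟙^⊥`, and the spectrum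
of each compression is that of `B_j` with `r_j + α s_j` removed once.
-/

open Matrix Polynomial

noncomputable def Aalpha {V : Type*} [Fintype V] (G : SimpleGraph V) (α : ℝ) :
    Matrix V V ℝ :=
  letI : DecidableEq V := Classical.decEq V
  letI : DecidableRel G.Adj := fun a b => Classical.dec _
  α • Matrix.diagonal (fun v => (G.degree v : ℝ)) + (1 - α) • G.adjMatrix ℝ

/-- The `H`-join of the family of graphs `G i`. -/
def HJoin {ι : Type*} (H : SimpleGraph ι) {V : ι → Type*} (G : ∀ i, SimpleGraph (V i)) :
    SimpleGraph (Σ i, V i) where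
  Adj x y := H.Adj x.1 y.1 ∨ ∃ (i : ι) (a b : V i), x = ⟨i, a⟩ ∧ y = ⟨i, b⟩ ∧ (G i).Adj a b
  symm := by
    refine ⟨?_⟩
    rintro ⟨i, a⟩ ⟨j, b⟩ (h | ⟨k, u, v, h1, h2, h3⟩)
    · exact Or.inl h.symm
    · exact Or.inr ⟨k, v, u, h2, h1, h3.symm⟩
  loopless := by
    refine ⟨?_⟩
    rintro ⟨i, a⟩ (h | ⟨k, u, v, h1, h2, h3⟩)
    · exact H.loopless.irrefl _ h
    · rw [h1] at h2
      have huv : u = v := by simpa using h2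
      subst huv
      exact (G k).loopless.irrefl _ h3

namespace Matrix

section Charpoly

variable {n R : Type*} [Fintype n] [DecidableEq n] [CommRing R]

theorem charmatrix_toSquareBlockProp (M : Matrix n n R) (p : n → Prop) [DecidablePred p] :
    (M.toSquareBlockProp p).charmatrix = M.charmatrix.toSquareBlockProp p := by
  ext i j : 1
  simp [charmatrix_apply, toSquareBlockProp_def, diagonal_apply, Subtype.val_inj]

theorem twoBlockTriangular_charpoly (M : Matrix n n R) (p : n → Prop)
    [DecidablePred p] (h : ∀ i, ¬p i → ∀ j, p j → M i j = 0) :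
    M.charpoly = (M.toSquareBlockProp p).charpoly * (M.toSquareBlockProp (¬p ·)).charpoly := by
  rw [charpoly, twoBlockTriangular_det _ p, charpoly, charpoly, charmatrix_toSquareBlockProp,
    charmatrix_toSquareBlockProp]
  intro i hi j hj
  have hij : i ≠ j := fun e => hi (e ▸ hj)
  simp [hij, h i hi j hj]

theorem charpoly_eq_X_sub_C_mul_of_col_eq_zero (M : Matrix n n R) (i₀ : n)
    (h : ∀ i, i ≠ i₀ → M i i₀ = 0) :
    M.charpoly = (X - C (M i₀ i₀)) * (M.toSquareBlockProp (· ≠ i₀)).charpoly := by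
  rw [M.twoBlockTriangular_charpoly (· = i₀) fun i hi j hj => hj ▸ h i hi]
  congr 1
  simp [charpoly, det_unique, toSquareBlockProp_def]
  rfl

theorem charpoly_transpose_mul_mul_of_orthogonal (A U : Matrix n n R) (hU : Uᵀ * U = 1) :
    (Uᵀ * A * U).charpoly = A.charpoly := by
  rw [charpoly_mul_comm, ← Matrix.mul_assoc, mul_eq_one_comm.mp hU, Matrix.one_mul]

variable {K : Type*} [Field K]

theorem isRoot_charpoly_of_mulVec_eq_smul {A : Matrix n n K} {v : n → K} {μ : K} (hv : v ≠ 0)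
    (h : A *ᵥ v = μ • v) : A.charpoly.IsRoot μ := by
  rw [← mem_spectrum_iff_isRoot_charpoly, spectrum.mem_iff, isUnit_iff_isUnit_det,
    isUnit_iff_ne_zero, not_not, ← exists_mulVec_eq_zero_iff]
  exact ⟨v, hv, by rw [sub_mulVec, h, Algebra.algebraMap_eq_smul_one, smul_mulVec, one_mulVec,
    sub_self]⟩

theorem card_roots_charpoly_erase_le [DecidableEq K] {A : Matrix n n K} {v : n → K} {μ : K}
    (hv : v ≠ 0) (h : A *ᵥ v = μ • v) :
    Multiset.card (A.charpoly.roots.erase μ) ≤ Fintype.card n - 1 := by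
  rw [Multiset.card_erase_of_mem ((mem_roots (charpoly_monic A).ne_zero).2
    (isRoot_charpoly_of_mulVec_eq_smul hv h)), ← charpoly_natDegree_eq_dim A]
  exact Nat.sub_le_sub_right (card_roots' _) 1

theorem roots_charpoly_erase_of_col_eq_zero [DecidableEq K] (M : Matrix n n K) (i₀ : n)
    (h : ∀ i, i ≠ i₀ → M i i₀ = 0) :
    M.charpoly.roots.erase (M i₀ i₀) = (M.toSquareBlockProp (· ≠ i₀)).charpoly.roots := by
  rw [M.charpoly_eq_X_sub_C_mul_of_col_eq_zero i₀ h,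
    roots_mul ((monic_X_sub_C _).mul (charpoly_monic _)).ne_zero, roots_X_sub_C,
    Multiset.singleton_add, Multiset.erase_cons_head]

theorem roots_charpoly_add_smul_one (A : Matrix n n K) (c : K) :
    (A + c • 1).charpoly.roots = A.charpoly.roots.map (c + ·) := by
  have h := charpoly_sub_scalar A (-c)
  rw [map_neg, sub_neg_eq_add, scalar_apply, ← smul_one_eq_diagonal] at h
  rw [h, show X + C (-c) = C 1 * X + C (-c) by simp, roots_comp_C_mul_X_add_C _ _ _ isUnit_one]
  simp [add_comm]

theorem roots_charpoly_add_smul_one_erase [DecidableEq K] (A : Matrix n n K) (c μ : K) :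
    (A + c • 1).charpoly.roots.erase (c + μ) = (A.charpoly.roots.erase μ).map (c + ·) := by
  rw [roots_charpoly_add_smul_one, Multiset.map_erase _ (add_right_injective c)]

end Charpoly

section BlockDiagonal

variable {ι R : Type*} [Fintype ι] [DecidableEq ι] [CommRing R] {V : ι → Type*}
  [∀ i, Fintype (V i)]

theorem det_blockDiagonal' [∀ i, DecidableEq (V i)] (M : ∀ i, Matrix (V i) (V i) R) :
    (blockDiagonal' M).det = ∏ i, (M i).det := by
  let : LinearOrder ι := LinearOrder.lift' (Fintype.equivFin ι) (Fintype.equivFin ι).injective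
  have hblock i : (blockDiagonal' M).toSquareBlock Sigma.fst i =
      reindex (Equiv.sigmaSubtype i).symm (Equiv.sigmaSubtype i).symm (M i) := by
    ext ⟨⟨j, a⟩, hj⟩ ⟨⟨l, b⟩, hl⟩
    dsimp only at hj hl
    subst hj hl
    simp [toSquareBlock_def, blockDiagonal'_apply_eq]
  rw [(blockTriangular_blockDiagonal' M).det]
  refine Finset.prod_subset (Finset.subset_univ _) ?_ |>.trans ?_
  · intro i _ hi
    have : IsEmpty (V i) := ⟨fun a => hi (Finset.mem_image.2 ⟨⟨i, a⟩, Finset.mem_univ _, rfl⟩)⟩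
    rw [hblock, det_reindex_self, det_isEmpty]
  · simp only [hblock, det_reindex_self]

theorem charmatrix_blockDiagonal' [∀ i, DecidableEq (V i)] (M : ∀ i, Matrix (V i) (V i) R) :
    (blockDiagonal' M).charmatrix = blockDiagonal' fun i => (M i).charmatrix := by
  ext ⟨i, a⟩ ⟨j, b⟩
  by_cases h : i = j
  · subst h
    by_cases hab : a = b <;> simp [blockDiagonal'_apply_eq, hab]
  · simp [blockDiagonal'_apply_ne _ _ _ h, h]

theorem charpoly_blockDiagonal' [∀ i, DecidableEq (V i)] (M : ∀ i, Matrix (V i) (V i) R) :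
    (blockDiagonal' M).charpoly = ∏ i, (M i).charpoly := by
  rw [charpoly, charmatrix_blockDiagonal', det_blockDiagonal']
  rfl

theorem sum_blockDiagonal'_apply_mul (U : ∀ i, Matrix (V i) (V i) R) (f : (Σ i, V i) → R)
    (l : ι) (b : V l) :
    ∑ x, blockDiagonal' U x ⟨l, b⟩ * f x = ∑ q, U l q b * f ⟨l, q⟩ := by
  rw [Fintype.sum_sigma, Finset.sum_eq_single l]
  · simp [blockDiagonal'_apply_eq]
  · intro i _ hi
    simp [blockDiagonal'_apply_ne _ _ _ hi]
  · simp

theorem blockDiagonal'_transpose_mul_submatrix_mul (U : ∀ i, Matrix (V i) (V i) R)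
    (c : Matrix ι ι R) :
    (blockDiagonal' U)ᵀ * c.submatrix Sigma.fst Sigma.fst * blockDiagonal' U =
      of fun x y => (1 ᵥ* U x.1) x.2 * c x.1 y.1 * (1 ᵥ* U y.1) y.2 := by
  ext ⟨j, a⟩ ⟨l, b⟩
  simp only [mul_apply, transpose_apply, submatrix_apply, of_apply]
  simp_rw [mul_comm _ (blockDiagonal' U _ ⟨l, b⟩), sum_blockDiagonal'_apply_mul]
  simp only [vecMul, dotProduct, Pi.one_apply, one_mul, ← Finset.sum_mul]
  ring

theorem charpoly_blockDiagonal'_add_of_col_eq_zero [∀ i, DecidableEq (V i)]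
    (T : ∀ i, Matrix (V i) (V i) R) (i₀ : ∀ i, V i) (hT : ∀ i a, a ≠ i₀ i → T i a (i₀ i) = 0)
    (K : Matrix ι ι R) :
    (blockDiagonal' T +
        of fun x y : Σ i, V i => if x.2 = i₀ x.1 ∧ y.2 = i₀ y.1 then K x.1 y.1 else 0).charpoly =
      (diagonal (fun i => T i (i₀ i) (i₀ i)) + K).charpoly *
        ∏ i, ((T i).toSquareBlockProp (· ≠ i₀ i)).charpoly := by
  set M := blockDiagonal' T +
    of fun x y : Σ i, V i => if x.2 = i₀ x.1 ∧ y.2 = i₀ y.1 then K x.1 y.1 else 0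
  let e₁ : ι ≃ {x : Σ i, V i // x.2 = i₀ x.1} :=
    { toFun i := ⟨⟨i, i₀ i⟩, rfl⟩
      invFun x := x.1.1
      left_inv _ := rfl
      right_inv := by
        rintro ⟨⟨i, a⟩, h : a = i₀ i⟩
        subst h
        rfl }
  let e₂ : (Σ i, {a // a ≠ i₀ i}) ≃ {x : Σ i, V i // x.2 ≠ i₀ x.1} :=
    { toFun x := ⟨⟨x.1, x.2.1⟩, x.2.2⟩
      invFun x := ⟨x.1.1, ⟨x.1.2, x.2⟩⟩
      left_inv _ := rfl
      right_inv _ := rfl }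
  have h₁ : reindex e₁.symm e₁.symm (M.toSquareBlockProp fun x => x.2 = i₀ x.1) =
      diagonal (fun i => T i (i₀ i) (i₀ i)) + K := by
    ext i j
    by_cases h : i = j
    · subst h
      simp [M, e₁, toSquareBlockProp_def, blockDiagonal'_apply_eq]
    · simp [M, e₁, toSquareBlockProp_def, blockDiagonal'_apply_ne _ _ _ h, h]
  have h₂ : reindex e₂.symm e₂.symm (M.toSquareBlockProp fun x => ¬x.2 = i₀ x.1) =
      blockDiagonal' fun i => (T i).toSquareBlockProp (· ≠ i₀ i) := by
    ext ⟨i, a, ha⟩ ⟨j, b, hb⟩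
    by_cases h : i = j
    · subst h
      simp [M, e₂, toSquareBlockProp_def, blockDiagonal'_apply_eq, ha]
    · simp [M, e₂, toSquareBlockProp_def, blockDiagonal'_apply_ne _ _ _ h, ha]
  rw [M.twoBlockTriangular_charpoly (fun x => x.2 = i₀ x.1), ← charpoly_reindex e₁.symm,
    h₁, ← charpoly_reindex e₂.symm, h₂, charpoly_blockDiagonal']
  rintro ⟨i, a⟩ ha ⟨j, b⟩ (hb : b = i₀ j)
  subst hb
  by_cases h : i = j
  · subst h
    simp [M, blockDiagonal'_apply_eq, hT i a ha, ha]
  · simp [M, blockDiagonal'_apply_ne _ _ _ h, ha]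

end BlockDiagonal

theorem exists_orthogonal_col_eq_const {V : Type*} [Fintype V] [DecidableEq V] (i₀ : V) :
    ∃ U : Matrix V V ℝ, Uᵀ * U = 1 ∧ ∀ a, U a i₀ = (√(Fintype.card V))⁻¹ := by
  let u : EuclideanSpace ℝ V := WithLp.toLp 2 fun _ => (√(Fintype.card V))⁻¹
  have hcard : (0 : ℝ) < Fintype.card V := by
    exact_mod_cast Fintype.card_pos_iff.2 ⟨i₀⟩
  have hu : ‖u‖ = 1 := by
    rw [EuclideanSpace.norm_eq]
    simp [u, Finset.card_univ, hcard.le, hcard.ne']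
  have hv : Orthonormal ℝ (({i₀} : Set V).domRestrict fun _ => u) := by
    rw [orthonormal_iff_ite]
    rintro ⟨i, rfl⟩ ⟨j, rfl⟩
    simp [Set.domRestrict, hu]
  obtain ⟨b, hb⟩ := hv.exists_orthonormalBasis_extension_of_card_eq (by simp)
  refine ⟨(EuclideanSpace.basisFun V ℝ).toBasis.toMatrix b, ?_, fun a => ?_⟩
  · simpa [star_eq_conjTranspose] using mem_unitaryGroup_iff'.1
      ((EuclideanSpace.basisFun V ℝ).toMatrix_orthonormalBasis_mem_unitary b)
  · simp [Module.Basis.toMatrix_apply, hb i₀ rfl, u]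

section ConstCol

variable {V R : Type*} [Fintype V] [DecidableEq V] [CommRing R] {U : Matrix V V R} {i₀ : V}
  {κ : R}

theorem mulVec_single_one_of_col_eq_const (hcol : ∀ a, U a i₀ = κ) :
    U *ᵥ Pi.single i₀ 1 = κ • 1 := by
  ext a
  simp [hcol]

theorem transpose_mulVec_smul_one_of_col_eq_const (hU : Uᵀ * U = 1) (hcol : ∀ a, U a i₀ = κ) :
    Uᵀ *ᵥ (κ • 1) = Pi.single i₀ 1 := by
  rw [← mulVec_single_one_of_col_eq_const hcol, mulVec_mulVec, hU, one_mulVec]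

theorem col_transpose_mul_mul_of_col_eq_const (hU : Uᵀ * U = 1) (hcol : ∀ a, U a i₀ = κ)
    {B : Matrix V V R} {r : R} (hB : B *ᵥ 1 = r • 1) :
    (Uᵀ * B * U).col i₀ = r • Pi.single i₀ 1 := by
  rw [← mulVec_single_one, ← mulVec_mulVec, mulVec_single_one_of_col_eq_const hcol,
    ← mulVec_mulVec, mulVec_smul, hB, smul_comm, mulVec_smul,
    transpose_mulVec_smul_one_of_col_eq_const hU hcol]

end ConstCol

section QuotientMatrix

variable {ι : Type*} [Fintype ι] [DecidableEq ι] {V : ι → Type*} [∀ i, Fintype (V i)]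
  [∀ i, DecidableEq (V i)]

theorem blockDiagonal'_transpose_mul_add_submatrix_mul {U : ∀ i, Matrix (V i) (V i) ℝ}
    {i₀ : ∀ i, V i} (hU : ∀ i, (U i)ᵀ * U i = 1)
    (hcol : ∀ i a, U i a (i₀ i) = (√(Fintype.card (V i)))⁻¹) (B : ∀ i, Matrix (V i) (V i) ℝ)
    (c : Matrix ι ι ℝ) :
    (blockDiagonal' U)ᵀ * (blockDiagonal' B + c.submatrix Sigma.fst Sigma.fst) * blockDiagonal' U =
      blockDiagonal' (fun i => (U i)ᵀ * B i * U i) +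
        of fun x y => if x.2 = i₀ x.1 ∧ y.2 = i₀ y.1 then
          c x.1 y.1 * √(Fintype.card (V x.1) * Fintype.card (V y.1)) else 0 := by
  have hσ i : 1 ᵥ* U i = √(Fintype.card (V i)) • Pi.single (i₀ i) 1 := by
    have hn : √(Fintype.card (V i)) ≠ 0 := by
      have : Nonempty (V i) := ⟨i₀ i⟩
      positivity
    rw [← mulVec_transpose, ← transpose_mulVec_smul_one_of_col_eq_const (hU i) (hcol i),
      mulVec_smul, smul_smul, mul_inv_cancel₀ hn, one_smul]
  rw [Matrix.mul_add, Matrix.add_mul, blockDiagonal'_transpose, ← blockDiagonal'_mul,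
    ← blockDiagonal'_mul, ← blockDiagonal'_transpose, blockDiagonal'_transpose_mul_submatrix_mul]
  congr 1
  ext x y
  simp only [hσ, of_apply, Pi.smul_apply, Pi.single_apply, smul_eq_mul]
  split_ifs <;> simp_all [Real.sqrt_mul, mul_comm, mul_left_comm, mul_assoc]

theorem roots_charpoly_blockDiagonal'_add_submatrix [∀ i, Nonempty (V i)]
    (B : ∀ i, Matrix (V i) (V i) ℝ) (r : ι → ℝ) (hB : ∀ i, B i *ᵥ 1 = r i • 1)
    (c : Matrix ι ι ℝ) :
    (blockDiagonal' B + c.submatrix Sigma.fst Sigma.fst).charpoly.roots =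
      (diagonal r +
          of fun i j => c i j * √(Fintype.card (V i) * Fintype.card (V j))).charpoly.roots +
        ∑ i, (B i).charpoly.roots.erase (r i) := by
  let i₀ i : V i := Classical.arbitrary (V i)
  choose U hU hcol using fun i => exists_orthogonal_col_eq_const (i₀ i)
  let T : ∀ i, Matrix (V i) (V i) ℝ := fun i => (U i)ᵀ * B i * U i
  have hTcol i := col_transpose_mul_mul_of_col_eq_const (hU i) (hcol i) (hB i)
  have hT₀ i a (ha : a ≠ i₀ i) : T i a (i₀ i) = 0 := by
    simpa [ha] using congrFun (hTcol i) a
  have hTr i : T i (i₀ i) (i₀ i) = r i := by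
    simpa using congrFun (hTcol i) (i₀ i)
  have hW : (blockDiagonal' U)ᵀ * blockDiagonal' U = 1 := by
    rw [blockDiagonal'_transpose, ← blockDiagonal'_mul, ← blockDiagonal'_one]
    exact congrArg _ (funext hU)
  have hroots i : (B i).charpoly.roots.erase (r i) =
      ((T i).toSquareBlockProp (· ≠ i₀ i)).charpoly.roots := by
    rw [← charpoly_transpose_mul_mul_of_orthogonal _ _ (hU i), ← hTr i,
      roots_charpoly_erase_of_col_eq_zero _ _ (hT₀ i)]
  have hsplit := charpoly_blockDiagonal'_add_of_col_eq_zero T i₀ hT₀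
    (of fun i j => c i j * √(Fintype.card (V i) * Fintype.card (V j)))
  simp only [of_apply] at hsplit
  have hprod : (∏ i, ((T i).toSquareBlockProp (· ≠ i₀ i)).charpoly).Monic :=
    monic_prod_of_monic _ _ fun i _ => charpoly_monic _
  rw [← charpoly_transpose_mul_mul_of_orthogonal _ _ hW,
    blockDiagonal'_transpose_mul_add_submatrix_mul hU hcol, hsplit,
    roots_mul ((charpoly_monic _).mul hprod).ne_zero, roots_prod _ _ hprod.ne_zero,
    Finset.sum_congr rfl fun i _ => hroots i]
  simp only [hTr]
  rfl

end QuotientMatrix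

end Matrix

theorem Aalpha_def {V : Type*} [Fintype V] [DecidableEq V] (G : SimpleGraph V) [DecidableRel G.Adj]
    (α : ℝ) :
    Aalpha G α = α • diagonal (fun v => (G.degree v : ℝ)) + (1 - α) • G.adjMatrix ℝ := by
  unfold Aalpha
  congr!

theorem Aalpha_mulVec_one {V : Type*} [Fintype V] {G : SimpleGraph V} [DecidableRel G.Adj]
    {r : ℕ} (hG : G.IsRegularOfDegree r) (α : ℝ) : Aalpha G α *ᵥ 1 = (r : ℝ) • 1 := by
  classical
  ext v
  have := G.adjMatrix_mulVec_const_apply (α := ℝ) (a := 1) (v := v)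
  simp_all [Aalpha_def, add_mulVec, smul_mulVec, mulVec_diagonal, hG v]
  ring

theorem roots_charpoly_Aalpha_erase_eq_zero {V : Type*} [Fintype V] [DecidableEq V]
    {G : SimpleGraph V} [DecidableRel G.Adj] {r : ℕ} (hG : G.IsRegularOfDegree r) (α : ℝ)
    (hV : Fintype.card V ≤ 1) : (Aalpha G α).charpoly.roots.erase (r : ℝ) = 0 := by
  rcases isEmpty_or_nonempty V with hV₀ | hV₀
  · simp [charpoly_isEmpty]
  · have := card_roots_charpoly_erase_le one_ne_zero (Aalpha_mulVec_one hG α)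
    rw [← Multiset.card_eq_zero]
    omega

section HJoin

variable {ι : Type*} (H : SimpleGraph ι) {V : ι → Type*} (G : ∀ i, SimpleGraph (V i))

theorem hJoin_adj_mk_same {i : ι} {a b : V i} :
    (HJoin H G).Adj ⟨i, a⟩ ⟨i, b⟩ ↔ (G i).Adj a b := by
  constructor
  · rintro (h | ⟨j, u, v, h1, h2, h3⟩)
    · exact absurd h (H.loopless.irrefl i)
    · cases h1; cases h2; exact h3
  · exact fun h => Or.inr ⟨i, a, b, rfl, rfl, h⟩

theorem hJoin_adj_mk_of_ne {i j : ι} (hij : i ≠ j) (a : V i) (b : V j) :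
    (HJoin H G).Adj ⟨i, a⟩ ⟨j, b⟩ ↔ H.Adj i j := by
  constructor
  · rintro (h | ⟨k, u, v, h1, h2, h3⟩)
    · exact h
    · cases h1; cases h2; exact absurd rfl hij
  · exact Or.inl

variable [DecidableEq ι] [DecidableRel H.Adj] [∀ i, DecidableRel (G i).Adj]
  [DecidableRel (HJoin H G).Adj]

theorem adjMatrix_hJoin (R : Type*) [Semiring R] :
    (HJoin H G).adjMatrix R =
      blockDiagonal' (fun i => (G i).adjMatrix R) +
        (H.adjMatrix R).submatrix Sigma.fst Sigma.fst := by
  ext ⟨i, a⟩ ⟨j, b⟩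
  by_cases h : i = j
  · subst h
    simp [blockDiagonal'_apply_eq, hJoin_adj_mk_same]
  · simp [blockDiagonal'_apply_ne _ _ _ h, hJoin_adj_mk_of_ne _ _ h]

variable [Fintype ι] [∀ i, Fintype (V i)]

theorem degree_hJoin (i : ι) (a : V i) :
    ((HJoin H G).degree ⟨i, a⟩ : ℝ) =
      (G i).degree a + ∑ l ∈ H.neighborFinset i, (Fintype.card (V l) : ℝ) := by
  have := (HJoin H G).adjMatrix_mulVec_const_apply (α := ℝ) (a := 1) (v := ⟨i, a⟩)
  rw [mul_one] at this
  rw [← this, adjMatrix_hJoin, add_mulVec, Pi.add_apply]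
  congr 1
  · simp only [mulVec, dotProduct, Function.const_apply, mul_one, Fintype.sum_sigma]
    rw [Finset.sum_eq_single i]
    · simp [blockDiagonal'_apply_eq, ← SimpleGraph.card_neighborFinset_eq_degree,
        SimpleGraph.neighborFinset_eq_filter]
    · intro j _ hj
      simp [blockDiagonal'_apply_ne _ _ _ (Ne.symm hj)]
    · simp
  · simp only [mulVec, dotProduct, submatrix_apply, SimpleGraph.adjMatrix_apply,
      Function.const_apply, mul_one, Fintype.sum_sigma, SimpleGraph.neighborFinset_eq_filter,
      Finset.sum_filter]
    refine Finset.sum_congr rfl fun l _ => ?_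
    split_ifs <;> simp

theorem Aalpha_hJoin [∀ i, DecidableEq (V i)] (α : ℝ) :
    Aalpha (HJoin H G) α =
      blockDiagonal' (fun i => Aalpha (G i) α +
        (α * ∑ l ∈ H.neighborFinset i, (Fintype.card (V l) : ℝ)) • 1) +
      ((1 - α) • H.adjMatrix ℝ).submatrix Sigma.fst Sigma.fst := by
  ext ⟨i, a⟩ ⟨j, b⟩
  by_cases h : i = j
  · subst h
    by_cases hab : a = b
    · subst hab
      simp [Aalpha_def, adjMatrix_hJoin, blockDiagonal'_apply_eq, degree_hJoin]
      ring
    · simp [Aalpha_def, adjMatrix_hJoin, blockDiagonal'_apply_eq, hab]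
  · simp [Aalpha_def, adjMatrix_hJoin, blockDiagonal'_apply_ne _ _ _ h, h]

end HJoin

theorem stmt7_general (k : ℕ) (H : SimpleGraph (Fin k)) [DecidableRel H.Adj]
    (nn : Fin k → ℕ) (hpos : ∀ j, 0 < nn j) (rr : Fin k → ℕ)
    (G : ∀ j : Fin k, SimpleGraph (Fin (nn j))) [∀ j, DecidableRel (G j).Adj]
    (hreg : ∀ j, (G j).IsRegularOfDegree (rr j))
    (α : ℝ) :
    (Aalpha (HJoin H G) α).charpoly.roots =
      (Matrix.of fun a b : Fin k =>
          if a = b then α * (∑ l ∈ H.neighborFinset a, (nn l : ℝ)) + (rr a : ℝ)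
          else if H.Adj a b then (1 - α) * Real.sqrt ((nn a : ℝ) * (nn b : ℝ))
          else 0).charpoly.roots +
      ∑ j ∈ Finset.univ.filter (fun j => 1 < nn j),
        (((Aalpha (G j) α).charpoly.roots).erase ((rr j : ℕ) : ℝ)).map
          (fun μ => α * (∑ l ∈ H.neighborFinset j, (nn l : ℝ)) + μ) := by
  classical
  have : ∀ j, Nonempty (Fin (nn j)) := fun j => ⟨⟨0, hpos j⟩⟩
  set s : Fin k → ℝ := fun j => α * ∑ l ∈ H.neighborFinset j, (nn l : ℝ)
  have hB j : (Aalpha (G j) α + s j • 1) *ᵥ 1 = (s j + rr j) • 1 := by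
    rw [add_mulVec, Aalpha_mulVec_one (hreg j), smul_mulVec, one_mulVec, add_smul, add_comm]
  rw [Aalpha_hJoin]
  simp only [Fintype.card_fin]
  rw [roots_charpoly_blockDiagonal'_add_submatrix _ _ hB]
  congr 1
  · congr 2
    ext a b
    by_cases hab : a = b
    · subst hab
      simp [s]
    · by_cases hH : H.Adj a b <;> simp [hab, hH]
  · rw [Finset.sum_subset (Finset.filter_subset _ _)]
    · exact Finset.sum_congr rfl fun j _ => roots_charpoly_add_smul_one_erase _ _ _
    · intro j _ hj
      rw [roots_charpoly_Aalpha_erase_eq_zero (hreg j) α (by simpa using hj), Multiset.map_zero]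

/-- Spectrum of `A_α` of an `H`-join of regular graphs: the multiset of eigenvalues of
`A_α(⋁_H G_j)` is the union, over blocks `G_j ≠ K_1`, of the eigenvalues of `A_α(G_j)`
other than the degree `r_j` (removed once), shifted by `α s_j`, together with the
eigenvalues of the `k × k` quotient matrix `M(G)`. -/
theorem stmt7 (k : ℕ) (H : SimpleGraph (Fin k)) [DecidableRel H.Adj]
    (nn : Fin k → ℕ) (hpos : ∀ j, 0 < nn j) (rr : Fin k → ℕ)
    (G : ∀ j : Fin k, SimpleGraph (Fin (nn j))) [∀ j, DecidableRel (G j).Adj]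
    (hreg : ∀ j, (G j).IsRegularOfDegree (rr j))
    (α : ℝ) (hα : α ∈ Set.Ico (0 : ℝ) 1) :
    (Aalpha (HJoin H G) α).charpoly.roots =
      (Matrix.of fun a b : Fin k =>
          if a = b then α * (∑ l ∈ H.neighborFinset a, (nn l : ℝ)) + (rr a : ℝ)
          else if H.Adj a b then (1 - α) * Real.sqrt ((nn a : ℝ) * (nn b : ℝ))
          else 0).charpoly.roots +
      ∑ j ∈ Finset.univ.filter (fun j => 1 < nn j),
        (((Aalpha (G j) α).charpoly.roots).erase ((rr j : ℕ) : ℝ)).map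
          (fun μ => α * (∑ l ∈ H.neighborFinset j, (nn l : ℝ)) + μ) :=
  stmt7_general k H nn hpos rr G hreg α
end

section
/- For even d ≥ 4 and α ∈ [0,1), the spectral radius ρ_α(B_{n-d+2,d/2,d/2}) equals the largest eigenvalue of the (d/2+1)×(d/2+1) symmetric tridiagonal matrix with diagonal (α, 2α, …, 2α, (n-d+1)α, 2α+n-d-1) and codiagonal (β, …, β, β√(2(n-d))), where β = 1-α. -/
open Matrix Polynomial

set_option linter.unusedVariables false

def bugAdj (p q r : ℕ) :
    (Fin q ⊕ Fin (p - 2) ⊕ Fin r) → (Fin q ⊕ Fin (p - 2) ⊕ Fin r) → Prop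
  | Sum.inl i, Sum.inl j => i.val + 1 = j.val ∨ j.val + 1 = i.val
  | Sum.inl i, Sum.inr (Sum.inl _) => i.val + 1 = q
  | Sum.inr (Sum.inl _), Sum.inl j => j.val + 1 = q
  | Sum.inr (Sum.inl a), Sum.inr (Sum.inl b) => a ≠ b
  | Sum.inr (Sum.inl _), Sum.inr (Sum.inr j) => j.val = 0
  | Sum.inr (Sum.inr j), Sum.inr (Sum.inl _) => j.val = 0
  | Sum.inr (Sum.inr i), Sum.inr (Sum.inr j) => i.val + 1 = j.val ∨ j.val + 1 = i.val
  | _, _ => False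

/-- The bug `B_{p,q,r}`: obtained from `K_p` by deleting an edge `uv` and attaching
paths `P_q` and `P_r` by one of their end vertices at `u` and `v` respectively.
Vertices: `Fin q` is the path ending at `u` (its last vertex), `Fin (p-2)` is the
rest of the clique, `Fin r` is the path starting at `v` (its first vertex). -/
def bugGraph (p q r : ℕ) : SimpleGraph (Fin q ⊕ Fin (p - 2) ⊕ Fin r) where
  Adj := bugAdj p q r
  symm := by
    constructor
    rintro (i | a | i) (j | b | j) h <;> simp_all [bugAdj] <;> tauto
  loopless := by
    constructor
    rintro (i | a | i) h <;> simp_all [bugAdj]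

/-- The `(d/2+1) × (d/2+1)` symmetric tridiagonal matrix with diagonal
`(α, 2α, …, 2α, (n-d+1)α, 2α+n-d-1)` and codiagonal `(β, …, β, β√(2(n-d)))`, `β = 1-α`. -/
noncomputable def T12 (n d : ℕ) (α : ℝ) :
    Matrix (Fin (d / 2 + 1)) (Fin (d / 2 + 1)) ℝ :=
  Matrix.of fun j l =>
    if j = l then
      (if j.val = 0 then α
       else if j.val = d / 2 then 2 * α + ((n : ℝ) - d) - 1
       else if j.val = d / 2 - 1 then ((n : ℝ) - d + 1) * α
       else 2 * α)
    else if j.val + 1 = l.val ∨ l.val + 1 = j.val then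
      (if j.val = d / 2 ∨ l.val = d / 2 then (1 - α) * Real.sqrt (2 * ((n : ℝ) - d))
       else 1 - α)
    else 0

/-!
The reflection of the bug exchanging its two pendant paths makes the partition into the pairs of
vertices it swaps, together with the remaining `p - 2` clique vertices, an equitable partition.
For the normalized characteristic matrix `S` of an equitable partition, `Sᵀ S = 1` and
`A_α S = S T`, where `T` is the quotient matrix of `A_α` symmetrized by `diag (√|V_k|)`; for the
bug, `T` is `T12 n d α`. Hence every eigenvalue of `T` is an eigenvalue of `A_α`, so it is at most
`ρ_α`. Conversely `A_α` is symmetric with nonnegative entries, so comparing Rayleigh quotients of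
`x` and `|x|` shows that `ρ_α` is an eigenvalue of `A_α` with a nonnegative eigenvector `x`, and
then `Sᵀ x` is a nonzero eigenvector of `T` for `ρ_α`.
-/

open Finset

theorem spectralRadius_toReal_eq_of_forall_abs_le {A : Type*} [Ring A] [Algebra ℝ A] {a : A}
    {r : ℝ} (hr : r ∈ spectrum ℝ a) (h : ∀ μ ∈ spectrum ℝ a, |μ| ≤ r) :
    (spectralRadius ℝ a).toReal = r := by
  have hr₀ : 0 ≤ r := (abs_nonneg r).trans (h r hr)
  suffices spectralRadius ℝ a = ENNReal.ofReal r by rw [this, ENNReal.toReal_ofReal hr₀]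
  refine le_antisymm (iSup₂_le fun μ hμ => ?_) ?_
  · rw [← enorm_eq_nnnorm, Real.enorm_eq_ofReal_abs]
    exact ENNReal.ofReal_le_ofReal (h μ hμ)
  · rw [← abs_of_nonneg hr₀, ← Real.enorm_eq_ofReal_abs, enorm_eq_nnnorm]
    exact le_iSup₂ (f := fun μ (_ : μ ∈ spectrum ℝ a) => (‖μ‖₊ : ENNReal)) r hr

theorem Real.div_sqrt_eq_sqrt_mul_div_sqrt {a b x y : ℝ} (ha : 0 ≤ a) (hb : 0 ≤ b) (hx : 0 < x)
    (hy : 0 < y) (h : x * a = y * b) : a / √y = √(a * b) / √x := by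
  have key : √(a * b) * √y = a * √x := calc
    √(a * b) * √y = √(a * a * x) := by
      rw [← Real.sqrt_mul (by positivity), mul_assoc, mul_comm b y, ← h]; ring_nf
    _ = a * √x := by rw [Real.sqrt_mul (mul_self_nonneg a), Real.sqrt_mul_self ha]
  have : 0 < √x := Real.sqrt_pos.mpr hx
  have : 0 < √y := Real.sqrt_pos.mpr hy
  field_simp
  linarith

theorem Fin.sum_univ_ite_val_eq (q t c : ℕ) :
    ∑ l : Fin q, (if l.val = t then c else 0) = if t < q then c else 0 := by
  rw [Fin.sum_univ_eq_sum_range (fun l => if l = t then c else 0), sum_ite_eq']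
  simp only [mem_range]

namespace Matrix

variable {m n : Type*} [Fintype m] [Fintype n] [DecidableEq n]

theorem mem_spectrum_of_mulVec_eq_smul {A : Matrix n n ℝ} {μ : ℝ} {x : n → ℝ} (hx : x ≠ 0)
    (h : A *ᵥ x = μ • x) : μ ∈ spectrum ℝ A := by
  rw [← spectrum_toLin', ← Module.End.hasEigenvalue_iff_mem_spectrum]
  exact Module.End.hasEigenvalue_of_hasEigenvector ⟨by simpa using h, hx⟩

theorem exists_mulVec_eq_smul_of_mem_spectrum {A : Matrix n n ℝ} {μ : ℝ}
    (h : μ ∈ spectrum ℝ A) : ∃ x : n → ℝ, x ≠ 0 ∧ A *ᵥ x = μ • x := by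
  rw [← spectrum_toLin', ← Module.End.hasEigenvalue_iff_mem_spectrum] at h
  obtain ⟨x, hx⟩ := h.exists_hasEigenvector
  exact ⟨x, hx.2, by simpa using Module.End.mem_eigenspace_iff.mp hx.1⟩

theorem spectrum_subset_of_mul_eq_mul [DecidableEq m] {A : Matrix m m ℝ} {T : Matrix n n ℝ}
    {S : Matrix m n ℝ} (hS : Sᵀ * S = 1) (h : A * S = S * T) : spectrum ℝ T ⊆ spectrum ℝ A := by
  intro μ hμ
  obtain ⟨x, hx, hTx⟩ := exists_mulVec_eq_smul_of_mem_spectrum hμ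
  refine mem_spectrum_of_mulVec_eq_smul (x := S *ᵥ x) (fun hSx => hx ?_) ?_
  · simpa [mulVec_mulVec, hS] using congrArg (Sᵀ *ᵥ ·) hSx
  · rw [mulVec_mulVec, h, ← mulVec_mulVec, hTx, mulVec_smul]

open scoped MatrixOrder in
theorem IsHermitian.posSemidef_smul_one_sub {A : Matrix n n ℝ} (hA : A.IsHermitian) {r : ℝ}
    (h : ∀ μ ∈ spectrum ℝ A, μ ≤ r) : (r • 1 - A).PosSemidef := by
  have := le_algebraMap_of_spectrum_le h (ha := hA)
  rwa [le_iff, Algebra.algebraMap_eq_smul_one] at this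

theorem IsHermitian.dotProduct_mulVec_le {A : Matrix n n ℝ} (hA : A.IsHermitian) {r : ℝ}
    (h : ∀ μ ∈ spectrum ℝ A, μ ≤ r) (x : n → ℝ) : x ⬝ᵥ A *ᵥ x ≤ r * (x ⬝ᵥ x) := by
  have := (hA.posSemidef_smul_one_sub h).dotProduct_mulVec_nonneg x
  rw [star_trivial, sub_mulVec, smul_mulVec, one_mulVec, dotProduct_sub, dotProduct_smul,
    smul_eq_mul] at this
  linarith

theorem IsHermitian.mulVec_eq_smul_of_le_dotProduct_mulVec {A : Matrix n n ℝ}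
    (hA : A.IsHermitian) {r : ℝ} (h : ∀ μ ∈ spectrum ℝ A, μ ≤ r) {x : n → ℝ}
    (hx : r * (x ⬝ᵥ x) ≤ x ⬝ᵥ A *ᵥ x) : A *ᵥ x = r • x := by
  have hle := hA.dotProduct_mulVec_le h x
  have hzero := ((hA.posSemidef_smul_one_sub h).dotProduct_mulVec_zero_iff x).mp (by
    rw [star_trivial, sub_mulVec, smul_mulVec, one_mulVec, dotProduct_sub, dotProduct_smul,
      smul_eq_mul]
    linarith)
  rw [sub_mulVec, smul_mulVec, one_mulVec, sub_eq_zero] at hzero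
  exact hzero.symm

omit [DecidableEq n] in
theorem abs_dotProduct_mulVec_le {A : Matrix n n ℝ} (hA : ∀ i j, 0 ≤ A i j) (x : n → ℝ) :
    |x ⬝ᵥ A *ᵥ x| ≤ |x| ⬝ᵥ A *ᵥ |x| := by
  simp only [dotProduct, mulVec, Finset.mul_sum, Pi.abs_apply]
  refine (Finset.abs_sum_le_sum_abs _ _).trans (Finset.sum_le_sum fun i _ => ?_)
  refine (Finset.abs_sum_le_sum_abs _ _).trans (Finset.sum_le_sum fun j _ => ?_)
  rw [abs_mul, abs_mul, abs_of_nonneg (hA i j)]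

omit [DecidableEq n] in
theorem abs_dotProduct_abs (x : n → ℝ) : |x| ⬝ᵥ |x| = x ⬝ᵥ x := by
  simp only [dotProduct, Pi.abs_apply, abs_mul_abs_self]

theorem IsHermitian.isGreatest_spectrum_spectralRadius [Nonempty n] {A : Matrix n n ℝ}
    (hA : A.IsHermitian) (hA₀ : ∀ i j, 0 ≤ A i j) :
    IsGreatest (spectrum ℝ A) (spectralRadius ℝ A).toReal := by
  obtain ⟨i, -, hi⟩ := Finset.univ.exists_max_image hA.eigenvalues Finset.univ_nonempty
  have hmax : IsGreatest (spectrum ℝ A) (hA.eigenvalues i) := by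
    refine ⟨hA.eigenvalues_mem_spectrum_real i, ?_⟩
    rw [hA.spectrum_real_eq_range_eigenvalues]
    rintro - ⟨j, rfl⟩
    exact hi j (Finset.mem_univ j)
  suffices habs : ∀ μ ∈ spectrum ℝ A, |μ| ≤ hA.eigenvalues i by
    rwa [spectralRadius_toReal_eq_of_forall_abs_le hmax.1 habs]
  intro μ hμ
  obtain ⟨x, hx, hAx⟩ := exists_mulVec_eq_smul_of_mem_spectrum hμ
  have hpos : 0 < x ⬝ᵥ x := by simpa using dotProduct_star_self_pos_iff.mpr hx
  refine le_of_mul_le_mul_right ?_ hpos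
  calc |μ| * (x ⬝ᵥ x) = |x ⬝ᵥ A *ᵥ x| := by
        rw [hAx, dotProduct_smul, smul_eq_mul, abs_mul, abs_of_pos hpos]
    _ ≤ |x| ⬝ᵥ A *ᵥ |x| := abs_dotProduct_mulVec_le hA₀ x
    _ ≤ hA.eigenvalues i * (|x| ⬝ᵥ |x|) := hA.dotProduct_mulVec_le hmax.2 |x|
    _ = hA.eigenvalues i * (x ⬝ᵥ x) := by rw [abs_dotProduct_abs]

theorem IsHermitian.exists_nonneg_mulVec_eq_smul_of_isGreatest {A : Matrix n n ℝ}
    (hA : A.IsHermitian) (hA₀ : ∀ i j, 0 ≤ A i j) {r : ℝ} (hr : IsGreatest (spectrum ℝ A) r) :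
    ∃ x : n → ℝ, 0 ≤ x ∧ x ≠ 0 ∧ A *ᵥ x = r • x := by
  obtain ⟨x, hx, hAx⟩ := exists_mulVec_eq_smul_of_mem_spectrum hr.1
  refine ⟨|x|, fun j => abs_nonneg (x j),
    fun h => hx (funext fun j => abs_eq_zero.mp (congrFun h j)),
    hA.mulVec_eq_smul_of_le_dotProduct_mulVec hr.2 ?_⟩
  calc r * (|x| ⬝ᵥ |x|) = x ⬝ᵥ A *ᵥ x := by
        rw [abs_dotProduct_abs, hAx, dotProduct_smul, smul_eq_mul]
    _ ≤ |x ⬝ᵥ A *ᵥ x| := le_abs_self _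
    _ ≤ |x| ⬝ᵥ A *ᵥ |x| := abs_dotProduct_mulVec_le hA₀ x

end Matrix

section Aalpha

variable {V : Type*} [Fintype V] (G : SimpleGraph V)

theorem Aalpha_apply [DecidableEq V] [DecidableRel G.Adj] (α : ℝ) (v w : V) :
    Aalpha G α v w = (if v = w then α * G.degree v else 0) + if G.Adj v w then 1 - α else 0 := by
  unfold Aalpha
  simp only [Matrix.add_apply, Matrix.smul_apply, diagonal_apply, SimpleGraph.adjMatrix_apply,
    smul_eq_mul, mul_ite, mul_one, mul_zero]
  -- `Aalpha` is built with classical decidability instances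
  congr!

theorem Aalpha_transpose (α : ℝ) : (Aalpha G α)ᵀ = Aalpha G α := by
  classical
  ext v w
  rw [transpose_apply, Aalpha_apply, Aalpha_apply]
  by_cases h : v = w
  · subst h; rfl
  · simp only [if_neg h, if_neg (Ne.symm h), G.adj_comm]

theorem isHermitian_Aalpha (α : ℝ) : (Aalpha G α).IsHermitian := by
  rw [IsHermitian, conjTranspose_eq_transpose_of_trivial, Aalpha_transpose]

theorem Aalpha_nonneg {α : ℝ} (hα₀ : 0 ≤ α) (hα₁ : α ≤ 1) (v w : V) : 0 ≤ Aalpha G α v w := by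
  classical
  rw [Aalpha_apply]
  have : 0 ≤ 1 - α := by linarith
  split_ifs <;> positivity

end Aalpha

namespace SimpleGraph

variable {V K : Type*} [Fintype V] [DecidableEq K] (G : SimpleGraph V) [DecidableRel G.Adj]

def IsEquitablePartition (π : V → K) (b : K → K → ℕ) : Prop :=
  ∀ v l, #{w | π w = l ∧ G.Adj v w} = b (π v) l

variable {G} {π : V → K} {b : K → K → ℕ}

namespace IsEquitablePartition

theorem card_mul_eq (h : G.IsEquitablePartition π b) (k l : K) :
    #{v | π v = k} * b k l = #{w | π w = l} * b l k := by
  have edges : ∀ k l, #{v | π v = k} * b k l =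
      ∑ v with π v = k, ∑ w with π w = l, if G.Adj v w then 1 else 0 := by
    intro k l
    rw [card_eq_sum_ones, sum_mul]
    refine sum_congr rfl fun v hv => ?_
    rw [← (mem_filter.mp hv).2, ← h v l, one_mul, sum_boole, Nat.cast_id, filter_filter]
  rw [edges, edges, sum_comm]
  simp_rw [G.adj_comm]

variable [Fintype K]

theorem degree_eq (h : G.IsEquitablePartition π b) (v : V) :
    G.degree v = ∑ l, b (π v) l := by
  rw [← card_neighborFinset_eq_degree, card_eq_sum_card_fiberwise (f := π) (t := univ) (by simp)]
  refine sum_congr rfl fun l _ => ?_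
  rw [← h v l, neighborFinset_eq_filter, filter_filter]
  simp only [and_comm]

theorem sum_Aalpha (h : G.IsEquitablePartition π b) (α : ℝ) (v : V) (k : K) :
    ∑ w with π w = k, Aalpha G α v w =
      (if π v = k then α * ∑ l, (b (π v) l : ℝ) else 0) + (1 - α) * b (π v) k := by
  classical
  simp only [Aalpha_apply, sum_add_distrib, sum_ite_eq, mem_filter, mem_univ, true_and]
  rw [← sum_filter, filter_filter, sum_const, nsmul_eq_mul, ← h v k, h.degree_eq, Nat.cast_sum]
  ring

end IsEquitablePartition

end SimpleGraph

section Partition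

variable {V K : Type*} [Fintype V] [DecidableEq K]

noncomputable def normalizedCharMatrix (π : V → K) : Matrix V K ℝ :=
  of fun v k => if π v = k then (√(#{w | π w = k} : ℝ))⁻¹ else 0

/-- The quotient matrix `(α (∑ j, b k j) δ_kl + (1 - α) b k l)` of `A_α` for an equitable partition
with counts `b`, conjugated by `diag (√|V_k|)`; it is symmetric because
`|V_k| b k l = |V_l| b l k`. -/
noncomputable def quotientAalpha [Fintype K] (b : K → K → ℕ) (α : ℝ) : Matrix K K ℝ :=
  of fun k l => (if k = l then α * ∑ j, (b k j : ℝ) else 0) + (1 - α) * √(b k l * b l k)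

variable {π : V → K}

theorem cast_card_fiber_pos (v : V) : (0 : ℝ) < #{w | π w = π v} :=
  Nat.cast_pos.mpr (card_pos.mpr ⟨v, by simp⟩)

theorem mul_normalizedCharMatrix_apply [Fintype K] (A : Matrix V V ℝ) (v : V) (k : K) :
    (A * normalizedCharMatrix π) v k = (√(#{w | π w = k} : ℝ))⁻¹ * ∑ w with π w = k, A v w := by
  simp only [mul_apply, normalizedCharMatrix, of_apply, mul_ite, mul_zero, ← sum_filter]
  rw [mul_comm, sum_mul]

theorem normalizedCharMatrix_mul_apply [Fintype K] (T : Matrix K K ℝ) (v : V) (k : K) :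
    (normalizedCharMatrix π * T) v k = (√(#{w | π w = π v} : ℝ))⁻¹ * T (π v) k := by
  simp [mul_apply, normalizedCharMatrix, ite_mul]

theorem normalizedCharMatrix_transpose_mul_self [Fintype K] (hπ : Function.Surjective π) :
    (normalizedCharMatrix π)ᵀ * normalizedCharMatrix π = 1 := by
  ext k l
  obtain ⟨v, rfl⟩ := hπ k
  have hv := cast_card_fiber_pos (π := π) v
  simp only [mul_apply, transpose_apply, normalizedCharMatrix, of_apply, mul_ite, ite_mul,
    mul_zero, zero_mul]
  rcases eq_or_ne (π v) l with rfl | hvl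
  · simp only [one_apply_eq, ← sum_filter, filter_filter, and_self, sum_const, nsmul_eq_mul]
    rw [← mul_inv, Real.mul_self_sqrt hv.le, mul_inv_cancel₀ hv.ne']
  · rw [one_apply_ne hvl]
    exact sum_eq_zero fun w _ => by split_ifs with h₁ h₂ <;> simp_all

theorem normalizedCharMatrix_transpose_mulVec_ne_zero {x : V → ℝ} (hx₀ : 0 ≤ x) (hx : x ≠ 0) :
    (normalizedCharMatrix π)ᵀ *ᵥ x ≠ 0 := by
  obtain ⟨v, hv⟩ := Function.ne_iff.mp hx
  refine Function.ne_iff.mpr ⟨π v, (sum_pos' (fun w _ => ?_) ⟨v, mem_univ v, ?_⟩).ne'⟩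
  · simp only [transpose_apply, normalizedCharMatrix, of_apply]
    exact mul_nonneg (by split_ifs <;> positivity) (hx₀ w)
  · simp only [transpose_apply, normalizedCharMatrix, of_apply, if_true]
    exact mul_pos (inv_pos.mpr (Real.sqrt_pos.mpr (cast_card_fiber_pos v)))
      ((hx₀ v).lt_of_ne (Ne.symm hv))

theorem quotientAalpha_transpose [Fintype K] (b : K → K → ℕ) (α : ℝ) :
    (quotientAalpha b α)ᵀ = quotientAalpha b α := by
  ext k l
  simp only [transpose_apply, quotientAalpha, of_apply, mul_comm (b l k : ℝ)]
  by_cases h : k = l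
  · subst h; rfl
  · rw [if_neg h, if_neg (Ne.symm h)]

variable [Fintype K] {G : SimpleGraph V} [DecidableRel G.Adj] {b : K → K → ℕ}

theorem SimpleGraph.IsEquitablePartition.Aalpha_mul_normalizedCharMatrix
    (h : G.IsEquitablePartition π b) (hπ : Function.Surjective π) (α : ℝ) :
    Aalpha G α * normalizedCharMatrix π = normalizedCharMatrix π * quotientAalpha b α := by
  ext v k
  rw [mul_normalizedCharMatrix_apply, normalizedCharMatrix_mul_apply, h.sum_Aalpha,
    quotientAalpha, of_apply]
  rcases eq_or_ne (π v) k with rfl | hvk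
  · rw [Real.sqrt_mul_self (Nat.cast_nonneg _)]
  · obtain ⟨w, rfl⟩ := hπ k
    simp only [if_neg hvk, zero_add, ← div_eq_inv_mul, mul_div_assoc]
    rw [Real.div_sqrt_eq_sqrt_mul_div_sqrt (Nat.cast_nonneg _) (Nat.cast_nonneg _)
      (cast_card_fiber_pos v) (cast_card_fiber_pos w) (by exact_mod_cast h.card_mul_eq _ _)]

theorem SimpleGraph.IsEquitablePartition.isGreatest_spectrum_quotientAalpha [DecidableEq V]
    [Nonempty K] (h : G.IsEquitablePartition π b) (hπ : Function.Surjective π) {α : ℝ}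
    (hα₀ : 0 ≤ α) (hα₁ : α ≤ 1) :
    IsGreatest (spectrum ℝ (quotientAalpha b α)) (spectralRadius ℝ (Aalpha G α)).toReal := by
  have : Nonempty V := (hπ (Classical.arbitrary K)).nonempty
  set S := normalizedCharMatrix π
  have hAS : Aalpha G α * S = S * quotientAalpha b α := h.Aalpha_mul_normalizedCharMatrix hπ α
  have hρ := (isHermitian_Aalpha G α).isGreatest_spectrum_spectralRadius
    (Aalpha_nonneg G hα₀ hα₁)
  obtain ⟨x, hx₀, hx, hAx⟩ := (isHermitian_Aalpha G α).exists_nonneg_mulVec_eq_smul_of_isGreatest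
    (Aalpha_nonneg G hα₀ hα₁) hρ
  refine ⟨mem_spectrum_of_mulVec_eq_smul
    (normalizedCharMatrix_transpose_mulVec_ne_zero (π := π) hx₀ hx) ?_,
    fun μ hμ => hρ.2 (spectrum_subset_of_mul_eq_mul
      (normalizedCharMatrix_transpose_mul_self hπ) hAS hμ)⟩
  have hSA : quotientAalpha b α * Sᵀ = Sᵀ * Aalpha G α := by
    simpa [transpose_mul, quotientAalpha_transpose, Aalpha_transpose] using
      (congrArg transpose hAS).symm
  rw [mulVec_mulVec, hSA, ← mulVec_mulVec, hAx, mulVec_smul]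

end Partition

section Bug

instance (p q r : ℕ) : DecidableRel (bugGraph p q r).Adj := fun v w => by
  rcases v with i | a | i <;> rcases w with j | b | j <;> simp only [bugGraph, bugAdj] <;>
    infer_instance

/-- Class `k < q` is the pair `{inl k, inr (inr (q - 1 - k))}` swapped by the reflection of the
bug; class `q` consists of the other `p - 2` clique vertices. -/
def bugClass (p q : ℕ) : Fin q ⊕ Fin (p - 2) ⊕ Fin q → Fin (q + 1)
  | .inl i => i.castSucc
  | .inr (.inl _) => Fin.last q
  | .inr (.inr j) => j.rev.castSucc

def bugCounts (p q : ℕ) (k l : Fin (q + 1)) : ℕ :=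
  if k.val = q then (if l.val = q then p - 3 else if l.val + 1 = q then 2 else 0)
  else if l.val = q then (if k.val + 1 = q then p - 2 else 0)
  else if k.val + 1 = l.val ∨ l.val + 1 = k.val then 1 else 0

theorem bugClass_surjective {p q : ℕ} (hp : 3 ≤ p) : Function.Surjective (bugClass p q) := by
  intro k
  rcases Fin.eq_castSucc_or_eq_last k with ⟨k, rfl⟩ | rfl
  · exact ⟨.inl k, rfl⟩
  · exact ⟨.inr (.inl ⟨0, by omega⟩), rfl⟩

theorem bugGraph_isEquitablePartition (p q : ℕ) :
    (bugGraph p q q).IsEquitablePartition (bugClass p q) (bugCounts p q) := by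
  intro v l
  have hlast (l : Fin q) : Fin.last q = l.castSucc ↔ False :=
    iff_false_intro (Fin.castSucc_ne_last l).symm
  rw [card_filter, Fintype.sum_sum_type, Fintype.sum_sum_type]
  rcases Fin.eq_castSucc_or_eq_last l with ⟨l, rfl⟩ | rfl <;> rcases v with i | a | j <;>
  simp only [bugGraph, bugAdj, bugClass, bugCounts, Fin.castSucc_inj, Fin.rev_eq_iff, ite_and,
    sum_ite_eq', mem_univ, if_true, Fin.val_rev, Fin.val_castSucc, Fin.val_last, hlast,
    Fin.castSucc_ne_last, if_false, sum_const_zero, sum_const, card_univ, Fintype.card_fin,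
    smul_eq_mul, sum_boole, filter_ne, card_erase_of_mem, Nat.cast_id] <;>
  first | omega | (split_ifs <;> simp_all <;> omega)

theorem sum_bugCounts {p q : ℕ} (hp : 3 ≤ p) (hq : 2 ≤ q) (k : Fin (q + 1)) :
    ∑ l, bugCounts p q k l = if k.val = 0 then 1 else if k.val + 1 < q then 2 else p - 1 := by
  rw [Fin.sum_univ_castSucc]
  simp only [bugCounts, Fin.val_castSucc, Fin.val_last, if_true]
  rw [sum_congr rfl (g := fun i : Fin q => if k.val = q then (if i.val = q - 1 then 2 else 0)
      else (if i.val = k.val + 1 then 1 else 0) +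
        if 0 < k.val then (if i.val = k.val - 1 then 1 else 0) else 0)
    (fun i _ => by have := i.isLt; split_ifs <;> omega)]
  simp only [sum_ite_irrel, sum_add_distrib, Fin.sum_univ_ite_val_eq, sum_const_zero]
  have := k.isLt
  split_ifs <;> omega

theorem T12_eq_quotientAalpha {n d : ℕ} (hd : 4 ≤ d) (hn : d + 1 < n) (α : ℝ) :
    T12 n d α = quotientAalpha (bugCounts (n - d + 2) (d / 2)) α := by
  obtain ⟨m, rfl⟩ := Nat.exists_eq_add_of_lt hn
  have hp : d + 1 + m + 1 - d + 2 = m + 4 := by omega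
  have hp3 : m + 4 - 3 = m + 1 := rfl
  have hp2 : m + 4 - 2 = m + 2 := rfl
  have hp1 : m + 4 - 1 = m + 3 := rfl
  have hnd : ((d + 1 + m + 1 : ℕ) : ℝ) - d = m + 2 := by push_cast; ring
  ext k l
  have := k.isLt
  have := l.isLt
  simp only [T12, quotientAalpha, of_apply, hp, hnd]
  by_cases hkl : k = l
  · subst hkl
    rw [if_pos rfl, if_pos rfl, Real.sqrt_mul_self (Nat.cast_nonneg _), ← Nat.cast_sum,
      sum_bugCounts (by omega) (by omega)]
    simp only [bugCounts, hp1, hp2, hp3]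
    split_ifs <;> first | (exfalso; omega) | (push_cast; ring)
  · have hkl' : k.val ≠ l.val := fun h => hkl (Fin.ext h)
    rw [if_neg hkl, if_neg hkl, zero_add]
    simp only [bugCounts, hp2, hp3]
    split_ifs <;> first | (exfalso; omega) | (push_cast; ring_nf)

end Bug

theorem stmt12_general (n d : ℕ) (hd4 : 4 ≤ d) (hn : d + 1 < n)
    (α : ℝ) (hα : α ∈ Set.Ico (0 : ℝ) 1) :
    (spectralRadius ℝ (Aalpha (bugGraph (n - d + 2) (d / 2) (d / 2)) α)).toReal ∈
        spectrum ℝ (T12 n d α) ∧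
    ∀ μ ∈ spectrum ℝ (T12 n d α),
      μ ≤ (spectralRadius ℝ (Aalpha (bugGraph (n - d + 2) (d / 2) (d / 2)) α)).toReal := by
  rw [T12_eq_quotientAalpha hd4 hn]
  exact (bugGraph_isEquitablePartition _ _).isGreatest_spectrum_quotientAalpha
    (bugClass_surjective (by omega)) hα.1 hα.2.le

/-- For even `d ≥ 4` and `α ∈ [0,1)`, `ρ_α(B_{n-d+2,d/2,d/2})` is the largest eigenvalue
of the symmetric tridiagonal matrix `T12 n d α` of order `d/2 + 1`. -/
theorem stmt12 (n d : ℕ) (hd4 : 4 ≤ d) (hde : Even d) (hn : d + 1 < n)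
    (α : ℝ) (hα : α ∈ Set.Ico (0 : ℝ) 1) :
    (spectralRadius ℝ (Aalpha (bugGraph (n - d + 2) (d / 2) (d / 2)) α)).toReal ∈
        spectrum ℝ (T12 n d α) ∧
    ∀ μ ∈ spectrum ℝ (T12 n d α),
      μ ≤ (spectralRadius ℝ (Aalpha (bugGraph (n - d + 2) (d / 2) (d / 2)) α)).toReal :=
  stmt12_general n d hd4 hn α hα
end
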